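/- Let m ≥ 1 be a natural number and for j ∈ ℕ \ {0} define d_j = (1/π) ∫₀^{2π} (cos η)^{m-1} sin η sin(jη) dη. Then ∑_{j=1}^m (1/j) d_j² = (1 / (m · 4^{m-1})) · C(m-1, ⌊(m-1)/2⌋)², where C denotes the binomial coefficient. -/

import Mathlib

/-!
Product-to-sum turns `sin η sin (j η)` into `(cos ((j-1) η) - cos ((j+1) η)) / 2`, so with
`n = m - 1` each `d_j` is `2⁻ⁿ (c_{j-1} - c_{j+1})`, where `c_i = C(n, (n+i)/2)` (zero for
`n + i` odd) are the Fourier cosine coefficients of `2ⁿ cosⁿ`. The ratio of consecutive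
binomial coefficients gives `m (c_{j-1} - c_{j+1}) = j (c_{j-1} + c_{j+1})`, hence
`d_j² / j = (c_{j-1}² - c_{j+1}²) / (m 4ⁿ)`. As `c_m = c_{m+1} = 0`, the sum telescopes to
`(c_0² + c_1²) / (m 4ⁿ) = C(n, ⌊n/2⌋)² / (m 4ⁿ)`.
-/

open Real intervalIntegral

/-- `2ⁿ cosⁿ η = cosPowCoeff n 0 + 2 ∑_{j ≥ 1} cosPowCoeff n j * cos (j η)`. -/
def cosPowCoeff (n j : ℕ) : ℕ :=
  if Even (n + j) then n.choose ((n + j) / 2) else 0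

lemma cosPowCoeff_eq_zero_of_lt {n j : ℕ} (h : n < j) : cosPowCoeff n j = 0 := by
  unfold cosPowCoeff
  split_ifs with hev
  · obtain ⟨r, hr⟩ := hev
    exact Nat.choose_eq_zero_of_lt (by omega)
  · rfl

lemma cosPowCoeff_succ_succ (n j : ℕ) :
    cosPowCoeff (n + 1) (j + 1) = cosPowCoeff n j + cosPowCoeff n (j + 2) := by
  have h₁ : n + 1 + (j + 1) = n + j + 2 := by ring
  have h₂ : n + (j + 2) = n + j + 2 := by ring
  have h₃ : Even (n + j + 2) ↔ Even (n + j) := by simp [parity_simps]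
  simp only [cosPowCoeff, h₁, h₂, h₃]
  split_ifs
  · rw [Nat.add_div_right _ two_pos, Nat.choose_succ_succ']
  · rfl

lemma cosPowCoeff_succ_zero (n : ℕ) : cosPowCoeff (n + 1) 0 = 2 * cosPowCoeff n 1 := by
  rcases Nat.even_or_odd' n with ⟨t, rfl | rfl⟩
  · simp [cosPowCoeff, parity_simps]
  · have h₁ : (2 * t + 1 + 1) / 2 = t + 1 := by omega
    simp only [cosPowCoeff, add_zero, h₁, show Even (2 * t + 1 + 1) by simp [parity_simps],
      if_true]
    rw [Nat.choose_succ_succ', ← Nat.choose_symm_half]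
    ring

lemma cosPowCoeff_sq_zero_add_sq_one (n : ℕ) :
    cosPowCoeff n 0 ^ 2 + cosPowCoeff n 1 ^ 2 = n.choose (n / 2) ^ 2 := by
  rcases Nat.even_or_odd' n with ⟨t, rfl | rfl⟩
  · simp [cosPowCoeff, parity_simps]
  · have h₁ : (2 * t + 1 + 1) / 2 = t + 1 := by omega
    have h₂ : (2 * t + 1) / 2 = t := by omega
    simp [cosPowCoeff, parity_simps, h₁, h₂, Nat.choose_symm_half]

lemma cast_choose_mul_sub {R : Type*} [CommRing R] (n k : ℕ) :
    (n.choose k : R) * (n - k) = n.choose (k + 1) * (k + 1) := by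
  rcases le_or_gt k n with hk | hk
  · rw [← Nat.cast_sub hk, ← Nat.cast_mul, ← Nat.choose_succ_right_eq]
    push_cast
    rfl
  · simp [Nat.choose_eq_zero_of_lt hk, Nat.choose_eq_zero_of_lt (Nat.lt_succ_of_lt hk)]

lemma add_one_mul_cosPowCoeff_sub (n j : ℕ) :
    ((n : ℝ) + 1) * (cosPowCoeff n j - cosPowCoeff n (j + 2)) =
      (j + 1) * (cosPowCoeff n j + cosPowCoeff n (j + 2)) := by
  have h₂ : n + (j + 2) = n + j + 2 := by ring
  have h₃ : Even (n + j + 2) ↔ Even (n + j) := by simp [parity_simps]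
  simp only [cosPowCoeff, h₂, h₃]
  split_ifs with hev
  · obtain ⟨k, hk⟩ := hev
    have hk₁ : (n + j) / 2 = k := by omega
    have hk₂ : (n + j + 2) / 2 = k + 1 := by omega
    have hj : (j : ℝ) = 2 * k - n := by
      have : ((n + j : ℕ) : ℝ) = k + k := by exact_mod_cast hk
      push_cast at this
      linarith
    rw [hk₁, hk₂, hj]
    linear_combination 2 * cast_choose_mul_sub (R := ℝ) n k
  · simp

lemma integral_cos_nat_mul {k : ℕ} (hk : k ≠ 0) : ∫ η in (0)..(2 * π), cos (k * η) = 0 := by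
  rw [integral_comp_mul_left cos (Nat.cast_ne_zero.mpr hk), integral_cos, mul_zero, sin_zero,
    sub_zero, show (k : ℝ) * (2 * π) = (2 * k : ℕ) * π by push_cast; ring, sin_nat_mul_pi,
    smul_zero]

theorem integral_cos_pow_mul_cos (n j : ℕ) :
    ∫ η in (0)..(2 * π), cos η ^ n * cos (j * η) = 2 * π / 2 ^ n * cosPowCoeff n j := by
  induction n generalizing j with
  | zero =>
    rcases eq_or_ne j 0 with rfl | hj
    · simp [cosPowCoeff]
    · simp [integral_cos_nat_mul hj, cosPowCoeff_eq_zero_of_lt (Nat.pos_of_ne_zero hj)]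
  | succ n ih =>
    cases j with
    | zero =>
      have h (η : ℝ) : cos η ^ (n + 1) * cos ((0 : ℕ) * η) = cos η ^ n * cos ((1 : ℕ) * η) := by
        simp [pow_succ]
      simp only [h, ih, cosPowCoeff_succ_zero]
      push_cast
      field_simp
      ring
    | succ j =>
      have h (η : ℝ) : cos η ^ (n + 1) * cos ((j + 1 : ℕ) * η) =
          (cos η ^ n * cos (j * η) + cos η ^ n * cos ((j + 2 : ℕ) * η)) / 2 := by
        have := two_mul_cos_mul_cos ((j + 1) * η) η
        rw [show (j + 1) * η - η = j * η by ring, show (j + 1) * η + η = (j + 2) * η by ring]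
          at this
        push_cast
        linear_combination (cos η ^ n / 2) * this
      simp only [h]
      rw [integral_div, integral_add (Continuous.intervalIntegrable (by fun_prop) _ _)
        (Continuous.intervalIntegrable (by fun_prop) _ _), ih, ih, cosPowCoeff_succ_succ]
      push_cast
      field_simp
      ring

theorem integral_cos_pow_mul_sin_mul_sin (n j : ℕ) :
    ∫ η in (0)..(2 * π), cos η ^ n * sin η * sin ((j + 1 : ℕ) * η) =
      π / 2 ^ n * ((cosPowCoeff n j : ℝ) - cosPowCoeff n (j + 2)) := by
  have h (η : ℝ) : cos η ^ n * sin η * sin ((j + 1 : ℕ) * η) =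
      (cos η ^ n * cos (j * η) - cos η ^ n * cos ((j + 2 : ℕ) * η)) / 2 := by
    have := two_mul_sin_mul_sin ((j + 1) * η) η
    rw [show (j + 1) * η - η = j * η by ring, show (j + 1) * η + η = (j + 2) * η by ring]
      at this
    push_cast
    linear_combination (cos η ^ n / 2) * this
  simp only [h]
  rw [integral_div, integral_sub (Continuous.intervalIntegrable (by fun_prop) _ _)
    (Continuous.intervalIntegrable (by fun_prop) _ _), integral_cos_pow_mul_cos,
    integral_cos_pow_mul_cos]
  ring

lemma sum_Icc_one_eq_sum_range {M : Type*} [AddCommMonoid M] (f : ℕ → M) (n : ℕ) :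
    ∑ j ∈ Finset.Icc 1 n, f j = ∑ j ∈ Finset.range n, f (j + 1) := by
  rw [Finset.range_eq_Ico, Finset.sum_Ico_add', zero_add, Finset.Ico_add_one_right_eq_Icc]

lemma sum_range_sub_two {M : Type*} [AddCommGroup M] (f : ℕ → M) (N : ℕ) :
    ∑ j ∈ Finset.range N, (f j - f (j + 2)) = f 0 + f 1 - (f N + f (N + 1)) := by
  rw [← Finset.sum_range_sub' (fun j => f j + f (j + 1))]
  congr 1 with j
  abel

/-- For `m ≥ 1` and `d j = (1/π) ∫₀^{2π} (cos η)^{m-1} sin η sin (j η) dη`, one has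
`∑_{j=1}^m (1/j) d_j² = (1 / (m · 4^{m-1})) · C(m-1, ⌊(m-1)/2⌋)²`. -/
theorem sum_inv_j_dj_sq (m : ℕ) (hm : 1 ≤ m) (d : ℕ → ℝ)
    (hd : ∀ j : ℕ, 1 ≤ j → d j =
      (1 / π) * ∫ η in (0:ℝ)..(2 * π),
        (Real.cos η) ^ (m - 1) * Real.sin η * Real.sin (j * η)) :
    ∑ j ∈ Finset.Icc 1 m, (1 / (j : ℝ)) * (d j) ^ 2
      = (1 / ((m : ℝ) * 4 ^ (m - 1))) * ((Nat.choose (m - 1) ((m - 1) / 2) : ℝ)) ^ 2 := by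
  obtain ⟨n, rfl⟩ := Nat.exists_eq_add_of_le' hm
  simp only [Nat.add_sub_cancel] at hd ⊢
  have hterm (j : ℕ) : 1 / ((j + 1 : ℕ) : ℝ) * d (j + 1) ^ 2 =
      ((cosPowCoeff n j : ℝ) ^ 2 - (cosPowCoeff n (j + 2) : ℝ) ^ 2) / ((n + 1) * 4 ^ n) := by
    rw [hd _ (Nat.le_add_left 1 j), integral_cos_pow_mul_sin_mul_sin,
      show (4 : ℝ) ^ n = (2 ^ n) ^ 2 by rw [← pow_mul, mul_comm, pow_mul]; norm_num]
    field_simp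
    push_cast
    linear_combination ((cosPowCoeff n j : ℝ) - cosPowCoeff n (j + 2)) *
      add_one_mul_cosPowCoeff_sub n j
  rw [sum_Icc_one_eq_sum_range, Finset.sum_congr rfl fun j _ => hterm j, ← Finset.sum_div,
    sum_range_sub_two (fun j => (cosPowCoeff n j : ℝ) ^ 2),
    cosPowCoeff_eq_zero_of_lt (by omega : n < n + 1),
    cosPowCoeff_eq_zero_of_lt (by omega : n < n + 1 + 1)]
  rw [← Nat.cast_pow, ← Nat.cast_pow, ← Nat.cast_add, cosPowCoeff_sq_zero_add_sq_one]
  push_cast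
  ring
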